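/- arXiv:2101.08600 — 9 statements merged into one kernel-verified Lean document; each statement's English description precedes it below -/
import Mathlib

section
/- Let n ≥ 4 be an integer and let p: ℝ → ℝ be a polynomial such that p(0) = 0, p(1) = 1, and 0 ≤ p(k) ≤ 1 for every integer k with 0 ≤ k ≤ n. Then sup_{x ∈ [0,n]} |p'''(x)| ≥ 1 − p(3), where p''' is the third derivative of p. -/
noncomputable section

open Polynomial

/-- Forward difference operator on polynomials. -/
def Sh (q : Polynomial ℝ) : Polynomial ℝ := q.comp (X + C 1) - q

lemma Sh_eval (q : Polynomial ℝ) (x : ℝ) : (Sh q).eval x = q.eval (x + 1) - q.eval x := by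
  simp [Sh]

lemma derivative_Sh (q : Polynomial ℝ) : derivative (Sh q) = Sh (derivative q) := by
  simp [Sh, derivative_comp]

lemma step_mvt (q : Polynomial ℝ) (x : ℝ) :
    ∃ c ∈ Set.Ioo x (x + 1), (Sh q).eval x = (derivative q).eval c := by
  obtain ⟨c, hc, hc'⟩ := exists_deriv_eq_slope (fun y => q.eval y)
    (by linarith : x < x + 1) (q.continuousOn) (fun y _ => q.differentiableAt.differentiableWithinAt)
  refine ⟨c, hc, ?_⟩
  rw [Sh_eval]
  have hd : deriv (fun y => q.eval y) c = (derivative q).eval c := Polynomial.deriv q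
  rw [hd] at hc'
  rw [hc']
  norm_num

lemma three_mvt (q : Polynomial ℝ) (t : ℝ) :
    ∃ c ∈ Set.Ioo t (t + 3), (Sh (Sh (Sh q))).eval t = (derivative^[3] q).eval c := by
  obtain ⟨c1, hc1, h1⟩ := step_mvt (Sh (Sh q)) t
  rw [derivative_Sh, derivative_Sh] at h1
  obtain ⟨c2, hc2, h2⟩ := step_mvt (Sh (derivative q)) c1
  rw [derivative_Sh] at h2
  obtain ⟨c3, hc3, h3⟩ := step_mvt (derivative (derivative q)) c2
  refine ⟨c3, ⟨?_, ?_⟩, ?_⟩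
  · obtain ⟨a, _⟩ := hc1; obtain ⟨b, _⟩ := hc2; obtain ⟨d, _⟩ := hc3; linarith
  · obtain ⟨_, a⟩ := hc1; obtain ⟨_, b⟩ := hc2; obtain ⟨_, d⟩ := hc3; linarith
  · rw [h1, h2, h3]
    simp [Function.iterate_succ, Function.comp]

/-- Let `n ≥ 4` and let `p` be a real polynomial with `p(0) = 0`, `p(1) = 1` and
`0 ≤ p(k) ≤ 1` for every integer `0 ≤ k ≤ n`. Then
`sup_{x ∈ [0,n]} |p'''(x)| ≥ 1 − p(3)`. -/
theorem third_derivative_bound (n : ℕ) (hn : 4 ≤ n) (p : Polynomial ℝ)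
    (h0 : p.eval 0 = 0) (h1 : p.eval 1 = 1)
    (hval : ∀ k : ℕ, k ≤ n → 0 ≤ p.eval (k : ℝ) ∧ p.eval (k : ℝ) ≤ 1) :
    1 - p.eval 3 ≤ sSup ((fun x : ℝ => |(Polynomial.derivative^[3] p).eval x|) ''
      Set.Icc (0 : ℝ) (n : ℝ)) := by
  have hn4 : (4 : ℝ) ≤ (n : ℝ) := by exact_mod_cast hn
  have hcont : Continuous fun x : ℝ => |(derivative^[3] p).eval x| :=
    (Polynomial.continuous _).abs
  have hbdd : BddAbove ((fun x : ℝ => |(derivative^[3] p).eval x|) '' Set.Icc (0 : ℝ) (n : ℝ)) :=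
    (isCompact_Icc.image hcont).bddAbove
  have key : ∀ c ∈ Set.Icc (0 : ℝ) (n : ℝ), |(derivative^[3] p).eval c| ≤
      sSup ((fun x : ℝ => |(Polynomial.derivative^[3] p).eval x|) '' Set.Icc (0 : ℝ) (n : ℝ)) := by
    intro c hc
    exact le_csSup hbdd ⟨c, hc, rfl⟩
  obtain ⟨ca, hca, hA⟩ := three_mvt p 0
  obtain ⟨cb, hcb, hB⟩ := three_mvt p 1
  have hMA := key ca ⟨le_of_lt hca.1, by linarith [hca.2]⟩
  have hMB := key cb ⟨by linarith [hcb.1], by linarith [hcb.2]⟩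
  have e2 : p.eval ((2 : ℕ) : ℝ) = p.eval 2 := by norm_num
  have e3 : p.eval ((3 : ℕ) : ℝ) = p.eval 3 := by norm_num
  have e4 : p.eval ((4 : ℕ) : ℝ) = p.eval 4 := by norm_num
  have hv2 := hval 2 (by omega); rw [e2] at hv2
  have hv3 := hval 3 (by omega); rw [e3] at hv3
  have hv4 := hval 4 (by omega); rw [e4] at hv4
  have eA : (Sh (Sh (Sh p))).eval 0 = p.eval 3 - 3 * p.eval 2 + 3 * p.eval 1 - p.eval 0 := by
    simp only [Sh_eval]; norm_num; ring
  have eB : (Sh (Sh (Sh p))).eval 1 = p.eval 4 - 3 * p.eval 3 + 3 * p.eval 2 - p.eval 1 := by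
    simp only [Sh_eval]; norm_num; ring
  have vA : (derivative^[3] p).eval ca = p.eval 3 - 3 * p.eval 2 + 3 * p.eval 1 - p.eval 0 := by
    rw [← hA, eA]
  have vB : (derivative^[3] p).eval cb = p.eval 4 - 3 * p.eval 3 + 3 * p.eval 2 - p.eval 1 := by
    rw [← hB, eB]
  have labs1 := le_abs_self ((derivative^[3] p).eval ca)
  have labs2 := le_abs_self ((derivative^[3] p).eval cb)
  rw [vA] at labs1 hMA
  rw [vB] at labs2 hMB
  linarith [hv2.1, hv2.2, hv3.1, hv3.2, hv4.1, hv4.2]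
end
end

section
/- For every Boolean function f: {0,1}^n → {0,1} with bs(f) = t, there exists a Boolean function g: {0,1}^t → {0,1} such that g(0^t) ≠ g(e_i) for every i = 1,...,t (where e_i is the i-th standard basis vector of {0,1}^t), and d(g) ≤ d(f). -/
noncomputable section

/-- Interpret a Boolean value as a real number (true ↦ 1, false ↦ 0). -/
def boolToReal (b : Bool) : ℝ := if b then 1 else 0

/-- `P` is the (unique) multilinear real polynomial representing the Boolean function `f`
on `{0,1}^n`. -/
def IsRepr {n : ℕ} (f : (Fin n → Bool) → Bool) (P : MvPolynomial (Fin n) ℝ) : Prop :=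
  (∀ i, P.degreeOf i ≤ 1) ∧
  ∀ x : Fin n → Bool, MvPolynomial.eval (fun i => boolToReal (x i)) P = boolToReal (f x)

/-- The degree `d(f)` of a Boolean function: the degree of its (unique) multilinear
representing polynomial. -/
def bdeg {n : ℕ} (f : (Fin n → Bool) → Bool) : ℕ :=
  sInf {d | ∃ P : MvPolynomial (Fin n) ℝ, IsRepr f P ∧ P.totalDegree = d}

/-- Flip the bits of `x` that belong to the set `R`. -/
def flipSet {n : ℕ} (x : Fin n → Bool) (R : Finset (Fin n)) : Fin n → Bool :=
  fun i => if i ∈ R then !(x i) else x i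

/-- The block sensitivity `bs(f)`: the largest `t` such that for some input `x` there are
`t` pairwise disjoint nonempty blocks, flipping each of which changes the value of `f`. -/
def blockSensitivity {n : ℕ} (f : (Fin n → Bool) → Bool) : ℕ :=
  sSup {t | ∃ (x : Fin n → Bool) (R : Fin t → Finset (Fin n)),
    (∀ i, (R i).Nonempty) ∧ (∀ i j, i ≠ j → Disjoint (R i) (R j)) ∧
    (∀ i, f (flipSet x (R i)) ≠ f x)}

namespace BSAux

open MvPolynomial

lemma boolToReal_pow (b : Bool) {k : ℕ} (hk : k ≠ 0) : boolToReal b ^ k = boolToReal b := by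
  cases b <;> simp [boolToReal, zero_pow hk]

lemma aeval_eq_eval {m : ℕ} (f : Fin m → ℝ) (p : MvPolynomial (Fin m) ℝ) :
    aeval f p = eval f p := by
  rw [aeval_def, Algebra.algebraMap_self]; rfl

def squash {m : ℕ} (d : Fin m →₀ ℕ) : Fin m →₀ ℕ :=
  d.mapRange (fun k => min k 1) (by simp)

lemma squash_apply {m} (d : Fin m →₀ ℕ) (i) : squash d i = min (d i) 1 := rfl

lemma squash_support {m} (d : Fin m →₀ ℕ) : (squash d).support = d.support := by
  ext i
  simp only [Finsupp.mem_support_iff, squash_apply]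
  omega

def ML {m : ℕ} (Q : MvPolynomial (Fin m) ℝ) : MvPolynomial (Fin m) ℝ :=
  ∑ d ∈ Q.support, monomial (squash d) (Q.coeff d)

lemma ML_degreeOf {m} (Q : MvPolynomial (Fin m) ℝ) (i : Fin m) : (ML Q).degreeOf i ≤ 1 := by
  rw [degreeOf_le_iff]
  intro d hd
  have := MvPolynomial.support_sum hd
  obtain ⟨e, _, hde⟩ := Finset.mem_biUnion.mp this
  have := support_monomial_subset hde
  rw [Finset.mem_singleton] at this
  subst this
  rw [squash_apply]
  omega

lemma ML_totalDegree {m} (Q : MvPolynomial (Fin m) ℝ) : (ML Q).totalDegree ≤ Q.totalDegree := by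
  refine totalDegree_finsetSum_le fun d hd => ?_
  refine le_trans (totalDegree_monomial_le _ _) ?_
  refine le_trans ?_ (le_totalDegree hd)
  rw [Finsupp.sum, Finsupp.sum, squash_support]
  refine Finset.sum_le_sum fun i _ => ?_
  rw [squash_apply]; exact min_le_left _ _

lemma ML_eval {m} (Q : MvPolynomial (Fin m) ℝ) (x : Fin m → Bool) :
    eval (fun i => boolToReal (x i)) (ML Q) = eval (fun i => boolToReal (x i)) Q := by
  conv_rhs => rw [← Q.support_sum_monomial_coeff]
  rw [ML, map_sum, map_sum]
  refine Finset.sum_congr rfl fun d _ => ?_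
  rw [eval_monomial, eval_monomial]
  congr 1
  rw [Finsupp.prod, Finsupp.prod, squash_support]
  refine Finset.prod_congr rfl fun i hi => ?_
  have h0 : d i ≠ 0 := Finsupp.mem_support_iff.mp hi
  rw [squash_apply, boolToReal_pow _ (by omega), boolToReal_pow _ h0]

def indPoly {m : ℕ} (x : Fin m → Bool) : MvPolynomial (Fin m) ℝ :=
  ∏ i, (if x i then X i else 1 - X i)

lemma eval_indPoly {m} (x y : Fin m → Bool) :
    eval (fun i => boolToReal (y i)) (indPoly x) = if x = y then 1 else 0 := by
  rw [indPoly, map_prod]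
  by_cases h : x = y
  · subst h
    rw [if_pos rfl]
    refine Finset.prod_eq_one fun i _ => ?_
    cases hx : x i <;> simp [hx, boolToReal]
  · rw [if_neg h]
    obtain ⟨i, hi⟩ : ∃ i, x i ≠ y i := by
      by_contra hc; push_neg at hc; exact h (funext hc)
    refine Finset.prod_eq_zero (Finset.mem_univ i) ?_
    cases hx : x i <;> cases hy : y i <;> simp_all [boolToReal]

def interp {m : ℕ} (h : (Fin m → Bool) → Bool) : MvPolynomial (Fin m) ℝ :=
  ∑ x : Fin m → Bool, C (boolToReal (h x)) * indPoly x

lemma eval_interp {m} (h : (Fin m → Bool) → Bool) (y : Fin m → Bool) :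
    eval (fun i => boolToReal (y i)) (interp h) = boolToReal (h y) := by
  rw [interp, map_sum]
  simp only [map_mul, eval_C, eval_indPoly]
  rw [Finset.sum_eq_single_of_mem y (Finset.mem_univ y)]
  · simp
  · intro b _ hb; simp [hb]

lemma exists_repr {m} (h : (Fin m → Bool) → Bool) : ∃ P, IsRepr h P :=
  ⟨ML (interp h), fun i => ML_degreeOf _ i, fun x => by rw [ML_eval, eval_interp]⟩

lemma bdeg_le_of_repr {m} (g : (Fin m → Bool) → Bool) (Q : MvPolynomial (Fin m) ℝ)
    (hQ : ∀ x, eval (fun i => boolToReal (x i)) Q = boolToReal (g x)) :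
    bdeg g ≤ Q.totalDegree := by
  have hmem : (ML Q).totalDegree ∈ {d | ∃ P, IsRepr g P ∧ P.totalDegree = d} :=
    ⟨ML Q, ⟨fun i => ML_degreeOf _ i, fun x => by rw [ML_eval, hQ]⟩, rfl⟩
  exact le_trans (Nat.sInf_le hmem) (ML_totalDegree Q)

lemma bdeg_mem {m} (f : (Fin m → Bool) → Bool) :
    ∃ P, IsRepr f P ∧ P.totalDegree = bdeg f := by
  obtain ⟨P, hP⟩ := exists_repr f
  have hne : {d | ∃ P : MvPolynomial (Fin m) ℝ, IsRepr f P ∧ P.totalDegree = d}.Nonempty :=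
    ⟨P.totalDegree, P, hP, rfl⟩
  exact Nat.sInf_mem hne

lemma totalDegree_bind₁_le {m t : ℕ} (q : Fin m → MvPolynomial (Fin t) ℝ)
    (hq : ∀ j, (q j).totalDegree ≤ 1) (P : MvPolynomial (Fin m) ℝ) :
    (bind₁ q P).totalDegree ≤ P.totalDegree := by
  have hrw : bind₁ q P = ∑ d ∈ P.support, aeval q (monomial d (P.coeff d)) := by
    rw [bind₁]
    conv_lhs => rw [as_sum P]
    rw [map_sum]
  rw [hrw]
  refine totalDegree_finsetSum_le fun d hd => ?_
  rw [aeval_monomial]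
  refine le_trans (totalDegree_mul _ _) ?_
  have h1 : (algebraMap ℝ (MvPolynomial (Fin t) ℝ) (P.coeff d)).totalDegree = 0 := by
    rw [algebraMap_eq]; exact totalDegree_C _
  rw [h1, zero_add, Finsupp.prod]
  refine le_trans (totalDegree_finset_prod _ _) ?_
  refine le_trans ?_ (le_totalDegree hd)
  rw [Finsupp.sum]
  refine Finset.sum_le_sum fun i _ => ?_
  refine le_trans (totalDegree_pow _ _) ?_
  calc d i * (q i).totalDegree ≤ d i * 1 := Nat.mul_le_mul_left _ (hq i)
    _ = d i := Nat.mul_one _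

lemma bs_mem {n : ℕ} (f : (Fin n → Bool) → Bool) :
    ∃ (x : Fin n → Bool) (R : Fin (blockSensitivity f) → Finset (Fin n)),
      (∀ i, (R i).Nonempty) ∧ (∀ i j, i ≠ j → Disjoint (R i) (R j)) ∧
      (∀ i, f (flipSet x (R i)) ≠ f x) := by
  set S := {t | ∃ (x : Fin n → Bool) (R : Fin t → Finset (Fin n)),
    (∀ i, (R i).Nonempty) ∧ (∀ i j, i ≠ j → Disjoint (R i) (R j)) ∧
    (∀ i, f (flipSet x (R i)) ≠ f x)} with hS
  have hne : S.Nonempty :=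
    ⟨0, fun _ => false, Fin.elim0, fun i => i.elim0, fun i => i.elim0, fun i => i.elim0⟩
  have hbdd : BddAbove S := by
    refine ⟨n, fun t' ht' => ?_⟩
    obtain ⟨x, R, h1, h2, _⟩ := ht'
    have hcard : (Finset.univ.biUnion R).card = ∑ i, (R i).card :=
      Finset.card_biUnion (fun i _ j _ hij => h2 i j hij)
    have h3 : t' ≤ ∑ i, (R i).card := by
      calc t' = ∑ _i : Fin t', 1 := by simp
        _ ≤ ∑ i, (R i).card := Finset.sum_le_sum fun i _ => (h1 i).card_pos
    have h4 : (Finset.univ.biUnion R).card ≤ n := by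
      simpa using Finset.card_le_univ (Finset.univ.biUnion R)
    omega
  have := Nat.sSup_mem hne hbdd
  exact this

end BSAux

open BSAux MvPolynomial

/-- For every Boolean function `f` with `bs(f) = t` there is a Boolean function `g` on
`t` variables that is sensitive at `0` to every coordinate (i.e. `g(0) ≠ g(eᵢ)` for
every `i`) with `d(g) ≤ d(f)`. -/
theorem reduction_to_fully_sensitive {n t : ℕ} (f : (Fin n → Bool) → Bool)
    (ht : blockSensitivity f = t) :
    ∃ g : (Fin t → Bool) → Bool,
      (∀ i : Fin t, g (fun _ => false) ≠ g (fun j => decide (j = i))) ∧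
      bdeg g ≤ bdeg f := by
  classical
  subst ht
  obtain ⟨x, R, h1, h2, h3⟩ := bs_mem f
  set B : (Fin (blockSensitivity f) → Bool) → Finset (Fin n) :=
    fun y => (Finset.univ.filter fun i => y i = true).biUnion R with hB
  refine ⟨fun y => f (flipSet x (B y)), ?_, ?_⟩
  · intro i
    have h0 : B (fun _ => false) = ∅ := by simp [hB]
    have hei : B (fun j => decide (j = i)) = R i := by
      rw [hB]
      simp [Finset.filter_eq']
    have hx0 : flipSet x (∅ : Finset (Fin n)) = x := by
      funext j; simp [flipSet]
    show f (flipSet x (B fun _ => false)) ≠ f (flipSet x (B fun j => decide (j = i)))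
    rw [h0, hei, hx0]
    exact fun h => h3 i h.symm
  · obtain ⟨P, ⟨hPdeg, hPeval⟩, hPd⟩ := bdeg_mem f
    set q : Fin n → MvPolynomial (Fin (blockSensitivity f)) ℝ := fun j =>
      if hj : ∃ i, j ∈ R i then (if x j then 1 - X hj.choose else X hj.choose)
      else C (boolToReal (x j)) with hq
    have hqdeg : ∀ j, (q j).totalDegree ≤ 1 := by
      intro j
      simp only [hq]
      split
      · split
        · refine le_trans (totalDegree_sub _ _) ?_
          simp [totalDegree_X]
        · simp [totalDegree_X]
      · simp
    have hkey : ∀ (y : Fin (blockSensitivity f) → Bool) (j : Fin n),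
        eval (fun i => boolToReal (y i)) (q j) = boolToReal (flipSet x (B y) j) := by
      intro y j
      by_cases hj : ∃ i, j ∈ R i
      · have hi0 : j ∈ R hj.choose := hj.choose_spec
        have hmem : j ∈ B y ↔ y hj.choose = true := by
          constructor
          · intro hm
            obtain ⟨i, hi, hji⟩ := Finset.mem_biUnion.mp hm
            rw [Finset.mem_filter] at hi
            have : i = hj.choose := by
              by_contra hne
              exact Finset.disjoint_left.mp (h2 i hj.choose hne) hji hi0
            rw [← this]; exact hi.2
          · intro hy
            exact Finset.mem_biUnion.mpr ⟨hj.choose, Finset.mem_filter.mpr ⟨Finset.mem_univ _, hy⟩, hi0⟩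
        simp only [hq, dif_pos hj]
        rw [flipSet]
        by_cases hy : y hj.choose = true
        · rw [if_pos (hmem.mpr hy)]
          cases hxj : x j <;> simp [hxj, hy, boolToReal]
        · rw [if_neg (fun hm => hy (hmem.mp hm))]
          have hy' : y hj.choose = false := by
            cases h : y hj.choose
            · rfl
            · exact absurd h hy
          cases hxj : x j <;> simp [hxj, hy', boolToReal]
      · have hnm : j ∉ B y := by
          intro hm
          obtain ⟨i, _, hji⟩ := Finset.mem_biUnion.mp hm
          exact hj ⟨i, hji⟩
        simp only [hq, dif_neg hj]
        rw [flipSet, if_neg hnm]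
        simp
    set Q := bind₁ q P with hQdef
    have hQeval : ∀ y : Fin (blockSensitivity f) → Bool,
        eval (fun i => boolToReal (y i)) Q = boolToReal (f (flipSet x (B y))) := by
      intro y
      rw [hQdef, ← aeval_eq_eval, aeval_bind₁]
      have : (fun j => aeval (fun i => boolToReal (y i)) (q j))
           = fun j => boolToReal (flipSet x (B y) j) := by
        funext j
        rw [aeval_eq_eval, hkey]
      rw [this, aeval_eq_eval, hPeval]
    calc bdeg (fun y => f (flipSet x (B y))) ≤ Q.totalDegree :=
          bdeg_le_of_repr _ Q hQeval
      _ ≤ P.totalDegree := totalDegree_bind₁_le q hqdeg P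
      _ = bdeg f := hPd
end
end

section
/- Let p: ℝ^n → ℝ be a multilinear polynomial. Then there exists a univariate polynomial q: ℝ → ℝ with deg q ≤ deg p such that for every x ∈ {0,1}^n, (1/n!)·∑_{π ∈ S_n} p(x_{π(1)}, ..., x_{π(n)}) = q(x_1 + x_2 + ... + x_n), where S_n is the group of permutations of {1,...,n}. -/
/-!
On `{0,1}ⁿ` a multilinear `p` is a linear combination of monomials `∏ i ∈ S, xᵢ`. Permutations
act transitively on the subsets of size `s = #S`, so `∑_π ∏ i ∈ S, x (π i)` depends only on `s`;
summing it over all such `S` gives `(n choose s) • ∑_π ∏ i ∈ S, x (π i) = n! • eₛ(x)`, with `eₛ`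
the elementary symmetric polynomial. For a `0/1`-vector with `k` ones, `eₛ(x) = k choose s`,
a polynomial of degree `s` in `k`.
-/

noncomputable section

open Finset Equiv MvPolynomial
open scoped Pointwise

section
variable {α R : Type*} [Fintype α] [DecidableEq α] [CommSemiring R]

theorem sum_perm_prod_comp_eq_of_card_eq {S S' : Finset α} (h : #S = #S') (y : α → R) :
    ∑ π : Perm α, ∏ i ∈ S, y (π i) = ∑ π : Perm α, ∏ i ∈ S', y (π i) := by
  have := Set.powersetCard.isPretransitive (α := α) (n := #S)
  obtain ⟨σ, hσ⟩ := MulAction.exists_smul_eq (Perm α)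
    (⟨S, rfl⟩ : Set.powersetCard α #S) ⟨S', h.symm⟩
  have hS' : S' = S.map σ.toEmbedding := by
    have : σ • S = S' := by simpa using congrArg Subtype.val hσ
    rw [← this, smul_finset_def, map_eq_image]
    rfl
  subst hS'
  simp only [prod_map]
  exact (Equiv.sum_comp (Equiv.mulRight σ) _).symm

omit [DecidableEq α] in
theorem eval_esymm_comp_perm (y : α → R) (π : Perm α) (s : ℕ) :
    eval (y ∘ π) (esymm α R s) = eval y (esymm α R s) := by
  rw [← eval_rename, esymm_isSymmetric]

theorem choose_smul_sum_perm_prod (S : Finset α) (y : α → R) :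
    (Fintype.card α).choose #S • ∑ π : Perm α, ∏ i ∈ S, y (π i)
      = (Fintype.card α).factorial • eval y (esymm α R #S) := by
  calc (Fintype.card α).choose #S • ∑ π : Perm α, ∏ i ∈ S, y (π i)
      = ∑ U ∈ powersetCard #S univ, ∑ π : Perm α, ∏ i ∈ U, y (π i) := by
        rw [← card_univ, ← card_powersetCard, ← sum_const]
        exact sum_congr rfl fun U hU => sum_perm_prod_comp_eq_of_card_eq
          (mem_powersetCard_univ.mp hU).symm y
    _ = ∑ π : Perm α, eval (y ∘ π) (esymm α R #S) := by
        rw [sum_comm]; simp [esymm]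
    _ = _ := by simp [eval_esymm_comp_perm, Fintype.card_perm]

theorem eval_esymm_indicator (T : Finset α) (s : ℕ) :
    eval (fun i => if i ∈ T then (1 : R) else 0) (esymm α R s) = (#T).choose s := by
  have : powersetCard s T = (powersetCard s univ).filter (· ⊆ T) := by
    ext U; simp [mem_powersetCard, and_comm]
  rw [← card_powersetCard, this, natCast_card_filter]
  simp only [esymm, map_sum, map_prod, eval_X, prod_boole]
  refine sum_congr rfl fun U _ => ?_
  simp only [subset_iff]
  congr

theorem one_div_factorial_mul_sum_perm_prod {K : Type*} [Field K] [CharZero K]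
    (S : Finset α) (y : α → K) :
    1 / ((Fintype.card α).factorial : K) * ∑ π : Perm α, ∏ i ∈ S, y (π i)
      = eval y (esymm α K #S) / (Fintype.card α).choose #S := by
  have hfact : ((Fintype.card α).factorial : K) ≠ 0 :=
    Nat.cast_ne_zero.mpr (Nat.factorial_ne_zero _)
  have hchoose : ((Fintype.card α).choose #S : K) ≠ 0 :=
    Nat.cast_ne_zero.mpr (Nat.choose_pos (card_le_univ S)).ne'
  have h := choose_smul_sum_perm_prod S y
  rw [nsmul_eq_mul, nsmul_eq_mul] at h
  rw [div_mul_eq_mul_div, one_mul, div_eq_div_iff hfact hchoose]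
  linear_combination h
end

section
variable {σ R : Type*} [CommSemiring R] {p : MvPolynomial σ R}

theorem MvPolynomial.card_support_le_totalDegree {m : σ →₀ ℕ} (hm : m ∈ p.support) :
    #m.support ≤ p.totalDegree :=
  calc #m.support = ∑ _ ∈ m.support, 1 := card_eq_sum_ones _
    _ ≤ m.sum fun _ e => e := sum_le_sum fun _ hi => Nat.one_le_iff_ne_zero.mpr
        (Finsupp.mem_support_iff.mp hi)
    _ ≤ p.totalDegree := le_totalDegree hm

theorem MvPolynomial.eval_eq_sum_prod_support_of_degreeOf_le_one
    (hp : ∀ i, p.degreeOf i ≤ 1) (y : σ → R) :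
    eval y p = ∑ m ∈ p.support, coeff m p * ∏ i ∈ m.support, y i := by
  rw [eval_eq]
  refine sum_congr rfl fun m hm => congrArg _ (prod_congr rfl fun i hi => ?_)
  have : m i = 1 := le_antisymm ((monomial_le_degreeOf i hm).trans (hp i))
    (Nat.one_le_iff_ne_zero.mpr (Finsupp.mem_support_iff.mp hi))
  rw [this, pow_one]
end

/-- Symmetrization lemma: if `p` is a multilinear real polynomial in `n` variables, then
there is a univariate polynomial `q` with `deg q ≤ deg p` such that for every
`x ∈ {0,1}^n`, the average of `p` over all permutations of the coordinates of `x`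
equals `q(x₁ + ⋯ + xₙ)`. -/
theorem symmetrization_lemma (n : ℕ) (p : MvPolynomial (Fin n) ℝ)
    (hml : ∀ i, p.degreeOf i ≤ 1) :
    ∃ q : Polynomial ℝ, q.natDegree ≤ p.totalDegree ∧
      ∀ x : Fin n → Bool,
        (1 / (n.factorial : ℝ)) *
            ∑ π : Equiv.Perm (Fin n),
              MvPolynomial.eval (fun i => boolToReal (x (π i))) p
          = q.eval (∑ i, boolToReal (x i)) := by
  refine ⟨∑ m ∈ p.support,
    Polynomial.C (coeff m p / (n.choose #m.support * (#m.support).factorial))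
      * descPochhammer ℝ #m.support, ?_, fun x => ?_⟩
  · refine Polynomial.natDegree_sum_le_of_forall_le _ _ fun m hm => ?_
    exact (Polynomial.natDegree_C_mul_le _ _).trans
      ((descPochhammer_natDegree ℝ _).trans_le (card_support_le_totalDegree hm))
  · set T := univ.filter fun i => x i = true
    have hy : (fun i => boolToReal (x i)) = fun i => if i ∈ T then 1 else 0 := by
      funext i; simp [boolToReal, T]
    have hsum : ∑ i, boolToReal (x i) = #T := by
      simp [hy]
    simp only [eval_eq_sum_prod_support_of_degreeOf_le_one hml, hsum]
    rw [sum_comm, mul_sum, Polynomial.eval_finsetSum]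
    refine sum_congr rfl fun m _ => ?_
    rw [← mul_sum, mul_left_comm]
    have hmean := one_div_factorial_mul_sum_perm_prod m.support (fun i => boolToReal (x i))
    rw [Fintype.card_fin] at hmean
    rw [hmean, hy, eval_esymm_indicator, Nat.cast_choose_eq_descPochhammer_div]
    simp only [Polynomial.eval_mul, Polynomial.eval_C]
    field_simp
end
end

section
/- Let n ≥ 3 and let c > 0 satisfy 2c + (2/3)c^2 − 2c/(3(n−2)) > 1, and set d = ⌈√(c(n−2))⌉. Then there exists a real polynomial q in n variables, of degree d if d is even and of degree d+1 if d is odd, such that |NAE_n(x) − q(x)| ≤ 1/3 for every x ∈ {0,1}^n. -/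
noncomputable section

/-- The not-all-equal function `NAE_n` as a real-valued function on `{0,1}^n`:
it is `0` if all the bits are equal and `1` otherwise. -/
def naeVal {n : ℕ} (x : Fin n → Bool) : ℝ :=
  if ∀ i j : Fin n, x i = x j then 0 else 1

/-!
Minsky–Papert symmetrisation reduces the problem to one variable: if `p` has degree `D`,
`p 0 = p n = 1/3` and `|1 - p t| ≤ 1/3` on `[1, n - 1]`, then `q = p (x₁ + ⋯ + xₙ)` works.
With `m = n - 2`, `D` even and `A = T_D (1 + 2/m)` take `p t = 1 - 2/(3A) · T_D ((2t - n)/m)`: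
the affine map sends `[1, n - 1]` into `[-1, 1]`, where `|T_D| ≤ 1`, and `0, n` to `∓(1 + 2/m)`,
where the even `T_D` equals `A`. So it remains to see `A ≥ 2`. For `x ≥ 0` the Chebyshev
polynomials satisfy `T_D (1 + x) ≥ 1 + D²x + D²(D² - 1)x²/6` (the Taylor polynomial at `1`,
all derivatives there being nonnegative). With `D² ≥ cm` the right-hand side at `x = 2/m` is
at least `1 + 2c + 2c²/3 - 2c/(3m)`, and the hypothesis on `c` says that this exceeds `2`.
-/

open Polynomial

namespace Polynomial.Chebyshev

theorem abs_T_real_eval_le_one (n : ℤ) {y : ℝ} (hy : |y| ≤ 1) : |(T ℝ n).eval y| ≤ 1 := by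
  obtain ⟨h₁, h₂⟩ := abs_le.mp hy
  rw [← Real.cos_arccos h₁ h₂, T_real_cos]
  exact Real.abs_cos_le_one _

theorem T_eval_neg_of_even {R : Type*} [CommRing R] {n : ℤ} (hn : Even n) (x : R) :
    (T R n).eval (-x) = (T R n).eval x := by
  simp [T_eval_neg, Int.negOnePow_even _ hn]

theorem quadratic_le_T_real_eval_one_add (k : ℕ) {x : ℝ} (hx : 0 ≤ x) :
    1 + k ^ 2 * x + k ^ 2 * (k ^ 2 - 1) * x ^ 2 / 6 ≤ (T ℝ k).eval (1 + x) := by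
  set u : ℕ → ℝ := fun j => (T ℝ j).eval (1 + x)
  set v : ℕ → ℝ := fun j => 1 + j ^ 2 * x + j ^ 2 * (j ^ 2 - 1) * x ^ 2 / 6
  have hu : ∀ j, u (j + 2) = 2 * (1 + x) * u (j + 1) - u j := fun j => by
    simp only [u, Nat.cast_add, Nat.cast_ofNat, Nat.cast_one, T_add_two, eval_sub, eval_mul,
      eval_ofNat, eval_X]
  -- `u - v` is nonnegative and nondecreasing, since `Δ² u = 2x u` while `Δ² v ≤ 2x v`.
  suffices h : ∀ k, v k ≤ u k ∧ u k - v k ≤ u (k + 1) - v (k + 1) from (h k).1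
  intro k
  induction k with
  | zero => simp [u, v, T_one]
  | succ k ih =>
    have hw : 0 ≤ u (k + 1) - v (k + 1) := by linarith [ih.1, ih.2]
    have hΔ : (u (k + 2) - v (k + 2)) - (u (k + 1) - v (k + 1)) =
        (u (k + 1) - v (k + 1)) - (u k - v k) + 2 * x * (u (k + 1) - v (k + 1)) +
          ((k : ℝ) + 1) ^ 2 * k * (k + 2) * x ^ 3 / 3 := by
      rw [hu]; simp only [v]; push_cast; ring
    have : 0 ≤ ((k : ℝ) + 1) ^ 2 * k * (k + 2) * x ^ 3 / 3 := by positivity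
    exact ⟨by linarith, by nlinarith [mul_nonneg hx hw]⟩

theorem two_le_T_real_eval_one_add_two_div {m c : ℝ} (hm : 1 ≤ m) (hc : 0 < c)
    (hineq : 2 * c + 2 / 3 * c ^ 2 - 2 * c / (3 * m) > 1) {D : ℕ} (hD : c * m ≤ D ^ 2) :
    2 ≤ (T ℝ D).eval (1 + 2 / m) := by
  have hm₀ : 0 < m := by linarith
  refine le_trans ?_ (quadratic_le_T_real_eval_one_add D (by positivity : (0 : ℝ) ≤ 2 / m))
  set s : ℝ := (D : ℝ) ^ 2 / m
  have hs : c ≤ s := by rw [le_div_iff₀ hm₀]; exact hD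
  set r : ℝ := 2 / (3 * m)
  have hr : r ≤ 2 / 3 := by rw [div_le_div_iff₀ (by positivity) (by norm_num)]; linarith
  have hgc : 1 < 2 * c + 2 / 3 * c ^ 2 - c * r := by
    have : c * r = 2 * c / (3 * m) := by simp only [r]; ring
    linarith
  have hgs : 2 * c + 2 / 3 * c ^ 2 - c * r ≤ 2 * s + 2 / 3 * s ^ 2 - s * r := by
    nlinarith [mul_nonneg (sub_nonneg.mpr hs) (by linarith : (0:ℝ) ≤ 2 + 2 / 3 * (s + c) - r)]
  have hval : 1 + (D : ℝ) ^ 2 * (2 / m) + D ^ 2 * (D ^ 2 - 1) * (2 / m) ^ 2 / 6 =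
      1 + (2 * s + 2 / 3 * s ^ 2 - s * r) := by
    simp only [s, r]; field_simp; ring
  linarith

end Polynomial.Chebyshev

namespace MvPolynomial

variable {σ R : Type*} [CommSemiring R]

theorem natDegree_aeval_le_totalDegree {f : σ → R[X]} (hf : ∀ i, (f i).natDegree ≤ 1)
    (p : MvPolynomial σ R) : (aeval f p).natDegree ≤ p.totalDegree := by
  rw [aeval_def, eval₂_eq]
  refine natDegree_sum_le_of_forall_le _ _ fun d hd => ?_
  refine natDegree_C_mul_le _ _ |>.trans <| (natDegree_prod_le _ _).trans ?_
  calc ∑ i ∈ d.support, (f i ^ d i).natDegree ≤ ∑ i ∈ d.support, d i :=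
        Finset.sum_le_sum fun i _ => natDegree_pow_le_of_le _ (hf i) |>.trans (mul_one _).le
    _ ≤ p.totalDegree := le_totalDegree hd

theorem totalDegree_aeval_le (S : MvPolynomial σ R) (P : R[X]) :
    (Polynomial.aeval S P).totalDegree ≤ P.natDegree * S.totalDegree := by
  rw [Polynomial.aeval_eq_sum_range]
  refine (totalDegree_finsetSum _ _).trans (Finset.sup_le fun i hi => ?_)
  calc (P.coeff i • S ^ i).totalDegree ≤ (S ^ i).totalDegree := totalDegree_smul_le _ _
    _ ≤ i * S.totalDegree := totalDegree_pow _ _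
    _ ≤ P.natDegree * S.totalDegree :=
      Nat.mul_le_mul_right _ (Nat.lt_succ_iff.mp (Finset.mem_range.mp hi))

theorem totalDegree_aeval_sum_X [Fintype σ] [Nonempty σ] [Nontrivial R] (P : R[X]) :
    (Polynomial.aeval (∑ i, X i : MvPolynomial σ R) P).totalDegree = P.natDegree := by
  classical
  obtain ⟨i₀⟩ := ‹Nonempty σ›
  refine le_antisymm ?_ ?_
  · calc _ ≤ P.natDegree * (∑ i, X i : MvPolynomial σ R).totalDegree := totalDegree_aeval_le _ _
      _ ≤ P.natDegree * 1 := by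
        refine Nat.mul_le_mul_left _ ((totalDegree_finsetSum _ _).trans (Finset.sup_le ?_))
        intro i _; rw [totalDegree_X]
      _ = P.natDegree := mul_one _
  · set f : σ → R[X] := Pi.single i₀ Polynomial.X
    have hf : ∀ i, (f i).natDegree ≤ 1 := fun i => by
      rcases eq_or_ne i i₀ with rfl | h
      · simp [f]
      · simp [f, h]
    have hS : aeval f (∑ i, X i : MvPolynomial σ R) = Polynomial.X := by
      simp [f]
    have := natDegree_aeval_le_totalDegree hf (Polynomial.aeval (∑ i, X i : MvPolynomial σ R) P)
    rwa [← Polynomial.aeval_algHom_apply, hS, Polynomial.aeval_X_left_apply] at this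

theorem eval_polynomial_aeval (g : σ → R) (S : MvPolynomial σ R) (P : R[X]) :
    eval g (Polynomial.aeval S P) = P.eval (eval g S) :=
  (Polynomial.aeval_algHom_apply (aeval g) S P).symm

end MvPolynomial

open Finset Polynomial.Chebyshev

theorem sum_boolToReal {ι : Type*} [Fintype ι] (x : ι → Bool) :
    ∑ i, boolToReal (x i) = #{i | x i} := by
  simp [boolToReal, Finset.sum_boole]

theorem card_filter_eq_zero_or_eq_card {ι : Type*} [Fintype ι] {x : ι → Bool}
    (h : ∀ i j, x i = x j) : #{i | x i} = 0 ∨ #{i | x i} = Fintype.card ι := by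
  by_cases hx : ∃ i, x i
  · obtain ⟨i, hi⟩ := hx
    right
    rw [Finset.filter_true_of_mem fun j _ => (h j i).trans hi, Finset.card_univ]
  · left
    push Not at hx
    simpa using hx

theorem card_filter_pos_and_lt_card {ι : Type*} [Fintype ι] {x : ι → Bool}
    (h : ¬ ∀ i j, x i = x j) : 0 < #{i | x i} ∧ #{i | x i} < Fintype.card ι := by
  push Not at h
  obtain ⟨i, j, hij⟩ := h
  obtain ⟨t, f, ht, hf⟩ : ∃ t f, x t = true ∧ x f = false := by
    cases hi : x i
    · exact ⟨j, i, by simpa [hi] using hij.symm, hi⟩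
    · exact ⟨i, j, hi, by simpa [hi] using hij.symm⟩
  exact ⟨Finset.card_pos.mpr ⟨t, by simp [ht]⟩,
    Finset.card_lt_univ_of_notMem (x := f) (by simp [hf])⟩

theorem exists_symmetric_nae_approx {n : ℕ} (hn : 3 ≤ n) {D : ℕ} (hD : Even D)
    (hA : 2 ≤ (T ℝ D).eval (1 + 2 / ((n : ℝ) - 2))) :
    ∃ P : ℝ[X], P.natDegree = D ∧ P.eval 0 = 1 / 3 ∧ P.eval (n : ℝ) = 1 / 3 ∧
      ∀ t : ℝ, 1 ≤ t → t ≤ n - 1 → |1 - P.eval t| ≤ 1 / 3 := by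
  have hm : (0 : ℝ) < n - 2 := by
    have : (3 : ℝ) ≤ n := by exact_mod_cast hn
    linarith
  set m : ℝ := n - 2
  set A := (T ℝ D).eval (1 + 2 / m)
  have hD₀ : D ≠ 0 := by
    rintro rfl
    norm_num [A, T_zero] at hA
  set L : ℝ[X] := C (2 / m) * X - C (n / m)
  have hL : ∀ t, L.eval t = (2 * t - n) / m := fun t => by
    simp only [L, eval_sub, eval_mul, eval_C, eval_X]
    ring
  have hLdeg : L.natDegree = 1 := by
    simp only [L]
    compute_degree!
    exact hm.ne'
  have hL₀ : L.eval 0 = -(1 + 2 / m) := by rw [hL]; field_simp; ring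
  have hLn : L.eval (n : ℝ) = 1 + 2 / m := by rw [hL]; field_simp; ring
  have hβ : 0 < 2 / (3 * A) := by positivity
  have hβA : 2 / (3 * A) * A = 2 / 3 := by field_simp
  have hβ_le : 2 / (3 * A) ≤ 1 / 3 := by
    rw [div_le_div_iff₀ (by positivity) (by norm_num)]
    linarith
  refine ⟨1 - C (2 / (3 * A)) * (T ℝ D).comp L, ?_, ?_, ?_, fun t ht₁ ht₂ => ?_⟩
  · rw [natDegree_sub_eq_right_of_natDegree_lt] <;>
      simp [natDegree_C_mul hβ.ne', natDegree_comp, hLdeg, Nat.pos_of_ne_zero hD₀]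
  · simp only [eval_sub, eval_one, eval_mul, eval_C, eval_comp, hL₀,
      T_eval_neg_of_even ((Int.even_coe_nat D).mpr hD)]
    change 1 - 2 / (3 * A) * A = 1 / 3
    rw [hβA]; norm_num
  · simp only [eval_sub, eval_one, eval_mul, eval_C, eval_comp, hLn]
    change 1 - 2 / (3 * A) * A = 1 / 3
    rw [hβA]; norm_num
  · have hLt : |L.eval t| ≤ 1 := by
      rw [hL, abs_div, abs_of_pos hm, div_le_one hm, abs_le]
      constructor <;> linarith
    simp only [eval_sub, eval_one, eval_mul, eval_C, eval_comp, sub_sub_cancel, abs_mul,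
      abs_of_pos hβ]
    calc 2 / (3 * A) * |(T ℝ D).eval (L.eval t)| ≤ 2 / (3 * A) * 1 :=
          mul_le_mul_of_nonneg_left (abs_T_real_eval_le_one _ hLt) hβ.le
      _ ≤ 1 / 3 := by rwa [mul_one]

theorem abs_naeVal_sub_eval_aeval_sum_X_le {n : ℕ} {P : ℝ[X]} (h₀ : P.eval 0 = 1 / 3)
    (hn : P.eval (n : ℝ) = 1 / 3) (hmid : ∀ t : ℝ, 1 ≤ t → t ≤ n - 1 → |1 - P.eval t| ≤ 1 / 3)
    (x : Fin n → Bool) :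
    |naeVal x - MvPolynomial.eval (fun i => boolToReal (x i))
      (aeval (∑ i, MvPolynomial.X i) P)| ≤ 1 / 3 := by
  rw [MvPolynomial.eval_polynomial_aeval]
  simp only [map_sum, MvPolynomial.eval_X, sum_boolToReal]
  by_cases h : ∀ i j, x i = x j
  · rw [naeVal, if_pos h]
    rcases card_filter_eq_zero_or_eq_card h with hk | hk <;>
      simp [hk, h₀, hn, abs_of_nonneg]
  · rw [naeVal, if_neg h]
    obtain ⟨hpos, hlt⟩ := card_filter_pos_and_lt_card h
    rw [Fintype.card_fin] at hlt
    refine hmid _ (by exact_mod_cast hpos) ?_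
    rw [le_sub_iff_add_le]
    exact_mod_cast hlt

/-- Let `n ≥ 3` and `c > 0` satisfy `2c + (2/3)c² − 2c/(3(n−2)) > 1`, and
`d = ⌈√(c(n−2))⌉`. Then there is a real polynomial in `n` variables, of degree `d`
if `d` is even and `d + 1` otherwise, that `1/3`-approximates `NAE_n`. -/
theorem nae_approximation (n : ℕ) (hn : 3 ≤ n) (c : ℝ) (hc : 0 < c)
    (hineq : 2 * c + (2 / 3) * c ^ 2 - 2 * c / (3 * ((n : ℝ) - 2)) > 1)
    (d : ℕ) (hd : d = ⌈Real.sqrt (c * ((n : ℝ) - 2))⌉₊) :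
    ∃ q : MvPolynomial (Fin n) ℝ,
      q.totalDegree = (if Even d then d else d + 1) ∧
      ∀ x : Fin n → Bool,
        |naeVal x - MvPolynomial.eval (fun i => boolToReal (x i)) q| ≤ 1 / 3 := by
  set D := if Even d then d else d + 1
  have hD : Even D := by
    by_cases h : Even d
    · simp [D, h]
    · simpa [D, h] using Nat.even_add_one.mpr h
  have hdD : d ≤ D := by by_cases h : Even d <;> simp [D, h]
  have hm : (1 : ℝ) ≤ n - 2 := by
    have : (3 : ℝ) ≤ n := by exact_mod_cast hn
    linarith
  have hcD : c * ((n : ℝ) - 2) ≤ (D : ℝ) ^ 2 := by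
    have hsqrt : Real.sqrt (c * ((n : ℝ) - 2)) ≤ D :=
      (hd ▸ Nat.le_ceil _).trans (by exact_mod_cast hdD)
    calc c * ((n : ℝ) - 2) = Real.sqrt (c * ((n : ℝ) - 2)) ^ 2 :=
          (Real.sq_sqrt (by positivity)).symm
      _ ≤ (D : ℝ) ^ 2 := by gcongr
  have : NeZero n := ⟨by omega⟩
  obtain ⟨P, hPdeg, hP₀, hPn, hPmid⟩ :=
    exists_symmetric_nae_approx hn hD (two_le_T_real_eval_one_add_two_div hm hc hineq hcD)
  exact ⟨aeval (∑ i, MvPolynomial.X i) P, by rw [MvPolynomial.totalDegree_aeval_sum_X, hPdeg],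
    abs_naeVal_sub_eval_aeval_sum_X_le hP₀ hPn hPmid⟩
end
end

section
/- Let p: ℝ → ℝ be a polynomial of degree at most 4 such that p(0) = 0, p(1) = 1, 0 ≤ p(k) ≤ 1 for every integer k with 0 ≤ k ≤ 8, and the (constant) fourth derivative satisfies |p^(4)| = 1/6. Then p(x) = −x^4/144 + 5x^3/36 − 125x^2/144 + 125x/72. -/
noncomputable section

/-- Let `p` be a real polynomial of degree at most `4` with `p(0) = 0`, `p(1) = 1`,
`0 ≤ p(k) ≤ 1` for every integer `0 ≤ k ≤ 8`, and whose (constant) fourth derivative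
has absolute value `1/6`. Then `p(x) = −x⁴/144 + 5x³/36 − 125x²/144 + 125x/72`. -/
theorem extremal_symmetrization (p : Polynomial ℝ) (hdeg : p.natDegree ≤ 4)
    (h0 : p.eval 0 = 0) (h1 : p.eval 1 = 1)
    (hval : ∀ k : ℕ, k ≤ 8 → 0 ≤ p.eval (k : ℝ) ∧ p.eval (k : ℝ) ≤ 1)
    (h4 : |(Polynomial.derivative^[4] p).eval 0| = 1 / 6) :
    ∀ x : ℝ, p.eval x =
      -(x ^ 4) / 144 + 5 * x ^ 3 / 36 - 125 * x ^ 2 / 144 + 125 * x / 72 := by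
  have hlt : p.natDegree < 5 := lt_of_le_of_lt hdeg (by norm_num)
  have heval : ∀ x : ℝ, p.eval x =
      p.coeff 0 + p.coeff 1 * x + p.coeff 2 * x ^ 2 + p.coeff 3 * x ^ 3 + p.coeff 4 * x ^ 4 := by
    intro x
    rw [Polynomial.eval_eq_sum_range' hlt]
    simp [Finset.sum_range_succ]
  have hder : (Polynomial.derivative^[4] p).eval 0 = 24 * p.coeff 4 := by
    rw [← Polynomial.coeff_zero_eq_eval_zero]
    show (Polynomial.derivative (Polynomial.derivative (Polynomial.derivative
      (Polynomial.derivative p)))).coeff 0 = 24 * p.coeff 4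
    simp [Polynomial.coeff_derivative]
    ring
  rw [hder] at h4
  have hc0 : p.coeff 0 = 0 := by have := heval 0; rw [h0] at this; linarith [this]
  have he1 : p.coeff 0 + p.coeff 1 + p.coeff 2 + p.coeff 3 + p.coeff 4 = 1 := by
    have := heval 1; rw [h1] at this; linarith [this]
  have g2 := hval 2 (by norm_num)
  have g3 := hval 3 (by norm_num)
  have g5 := hval 5 (by norm_num)
  have g6 := hval 6 (by norm_num)
  have g8 := hval 8 (by norm_num)
  rw [show (((2:ℕ)):ℝ) = (2:ℝ) by norm_num, heval] at g2
  rw [show (((3:ℕ)):ℝ) = (3:ℝ) by norm_num, heval] at g3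
  rw [show (((5:ℕ)):ℝ) = (5:ℝ) by norm_num, heval] at g5
  rw [show (((6:ℕ)):ℝ) = (6:ℝ) by norm_num, heval] at g6
  rw [show (((8:ℕ)):ℝ) = (8:ℝ) by norm_num, heval] at g8
  norm_num at g2 g3 g5 g6 g8
  obtain ⟨g2a, g2b⟩ := g2
  obtain ⟨g3a, g3b⟩ := g3
  obtain ⟨g5a, g5b⟩ := g5
  obtain ⟨g6a, g6b⟩ := g6
  obtain ⟨g8a, g8b⟩ := g8
  rcases (abs_eq (by norm_num : (0:ℝ) ≤ 1/6)).mp h4 with hc4 | hc4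
  · exfalso
    have hc4' : p.coeff 4 = 1 / 144 := by linarith
    linarith
  · have hc4' : p.coeff 4 = -(1 / 144) := by linarith
    have hc3 : p.coeff 3 = 5 / 36 := le_antisymm (by linarith) (by linarith)
    have hc2 : p.coeff 2 = -(125 / 144) := le_antisymm (by linarith) (by linarith)
    have hc1 : p.coeff 1 = 125 / 72 := le_antisymm (by linarith) (by linarith)
    intro x
    rw [heval, hc0, hc1, hc2, hc3, hc4']
    ring
end
end

section
/- There is no polynomial p(x) = c_1·x + c_2·x^2 + c_3·x^3 + c_4·x^4 with real coefficients such that c_4 > 0, p(1) = 1, and 0 ≤ p(k) ≤ 1 for every integer k with 2 ≤ k ≤ 10. -/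
/-- There is no polynomial `p(x) = c₁x + c₂x² + c₃x³ + c₄x⁴` with `c₄ > 0`, `p(1) = 1`
and `0 ≤ p(k) ≤ 1` for every integer `2 ≤ k ≤ 10`. -/
theorem no_positive_leading_coeff :
    ¬ ∃ c₁ c₂ c₃ c₄ : ℝ, 0 < c₄ ∧
      c₁ * 1 + c₂ * 1 ^ 2 + c₃ * 1 ^ 3 + c₄ * 1 ^ 4 = 1 ∧
      ∀ k : ℕ, 2 ≤ k → k ≤ 10 →
        0 ≤ c₁ * (k : ℝ) + c₂ * (k : ℝ) ^ 2 + c₃ * (k : ℝ) ^ 3 + c₄ * (k : ℝ) ^ 4 ∧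
        c₁ * (k : ℝ) + c₂ * (k : ℝ) ^ 2 + c₃ * (k : ℝ) ^ 3 + c₄ * (k : ℝ) ^ 4 ≤ 1 := by
  rintro ⟨c₁, c₂, c₃, c₄, hc₄, h1, h⟩
  have h2 := h 2 (by norm_num) (by norm_num)
  have h5 := h 5 (by norm_num) (by norm_num)
  have h8 := h 8 (by norm_num) (by norm_num)
  push_cast at h2 h5 h8
  linarith [h2.2, h5.1, h8.2]
end

section
/- For every polynomial p(x) = c_1·x + c_2·x^2 + c_3·x^3 + c_4·x^4 with real coefficients such that p(1) = 1 and 0 ≤ p(k) ≤ 1 for every integer k with 2 ≤ k ≤ 10, we have c_4 ≥ −1/144. -/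
/-- For every polynomial `p(x) = c₁x + c₂x² + c₃x³ + c₄x⁴` with `p(1) = 1` and
`0 ≤ p(k) ≤ 1` for every integer `2 ≤ k ≤ 10`, we have `c₄ ≥ −1/144`. -/
theorem leading_coeff_lower_bound (c₁ c₂ c₃ c₄ : ℝ)
    (h1 : c₁ * 1 + c₂ * 1 ^ 2 + c₃ * 1 ^ 3 + c₄ * 1 ^ 4 = 1)
    (hval : ∀ k : ℕ, 2 ≤ k → k ≤ 10 →
      0 ≤ c₁ * (k : ℝ) + c₂ * (k : ℝ) ^ 2 + c₃ * (k : ℝ) ^ 3 + c₄ * (k : ℝ) ^ 4 ∧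
      c₁ * (k : ℝ) + c₂ * (k : ℝ) ^ 2 + c₃ * (k : ℝ) ^ 3 + c₄ * (k : ℝ) ^ 4 ≤ 1) :
    c₄ ≥ -(1 / 144) := by
  obtain ⟨h2l, h2u⟩ := hval 2 (by norm_num) (by norm_num)
  obtain ⟨h5l, h5u⟩ := hval 5 (by norm_num) (by norm_num)
  obtain ⟨h8l, h8u⟩ := hval 8 (by norm_num) (by norm_num)
  obtain ⟨h10l, h10u⟩ := hval 10 (by norm_num) (by norm_num)
  push_cast at *
  linarith
end

section
/- Let f: {0,1}^10 → {0,1} be a Boolean function with d(f) ≤ 4 such that f(0^10) = 0 and f(e_i) = 1 for every standard basis vector e_i ∈ {0,1}^10. Then for every integer w with 0 ≤ w ≤ 10, the number of inputs x ∈ {0,1}^10 of Hamming weight w with f(x) = 1 equals C(10,w)·q(w), where q(x) = −x^4/144 + 5x^3/36 − 125x^2/144 + 125x/72 and C(10,w) is the binomial coefficient. In other words, the only univariate polynomial achievable as the symmetrization of such a function is q. -/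
/-
For a multilinear `P` and an input `x` of weight `w`, the monomial with support `S` evaluates to
`[S ⊆ supp x]`, and exactly `C(n - k, w - k) = C(n, w) (w)ₖ / (n)ₖ` inputs of weight `w` contain a
given `S` with `|S| = k`. Hence the number of accepted weight-`w` inputs is `C(n, w) p(w)` for the
univariate polynomial `p = Σₘ cₘ (X)ₖ / (n)ₖ` of degree at most `d(f)` (Minsky–Papert).

For `n = 10` and `d(f) ≤ 4` we get a quartic with `p(0) = 0`, `p(1) = 1` and `0 ≤ p(w) ≤ 1` for
`w ≤ 10`. The quartic `q` attains the bound `1` at `w = 2, 8, 9` and `0` at `w = 5, 10`, and these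
five one-sided constraints together with the two equations already determine `p = q`.
-/

noncomputable section

/-- The conjectured extremal symmetrization polynomial
`q(x) = −x⁴/144 + 5x³/36 − 125x²/144 + 125x/72`. -/
def qPoly (x : ℝ) : ℝ :=
  -(x ^ 4) / 144 + 5 * x ^ 3 / 36 - 125 * x ^ 2 / 144 + 125 * x / 72

open Finset MvPolynomial

section BooleanCube

variable {ι : Type*} [Fintype ι]

def boolSupport (x : ι → Bool) : Finset ι := {i | x i = true}

@[simp] lemma mem_boolSupport {x : ι → Bool} {i : ι} : i ∈ boolSupport x ↔ x i = true := by
  simp [boolSupport]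

variable [DecidableEq ι]

lemma boolSupport_decide_mem (t : Finset ι) : boolSupport (fun i => decide (i ∈ t)) = t := by
  ext; simp

lemma decide_mem_boolSupport (x : ι → Bool) : (fun i => decide (i ∈ boolSupport x)) = x := by
  funext i; simp

lemma card_filter_card_boolSupport_eq_and_subset {s : Finset ι} {w : ℕ} (hsw : #s ≤ w) :
    #{x : ι → Bool | #(boolSupport x) = w ∧ s ⊆ boolSupport x} =
      (Fintype.card ι - #s).choose (w - #s) := by
  rw [← card_compl, ← card_powersetCard]
  refine card_nbij' (fun x => boolSupport x \ s) (fun t i => decide (i ∈ t ∪ s))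
    ?_ ?_ ?_ ?_
  · intro x hx
    simp only [coe_filter, mem_univ, true_and, Set.mem_ofPred_eq, mem_coe,
      mem_powersetCard] at hx ⊢
    exact ⟨fun i hi => by simp_all, by rw [card_sdiff_of_subset hx.2, hx.1]⟩
  · intro t ht
    simp only [mem_coe, mem_powersetCard, coe_filter, mem_univ, true_and,
      Set.mem_ofPred_eq, boolSupport_decide_mem] at ht ⊢
    have hdisj : Disjoint t s := by simpa using (subset_compl_iff_disjoint_right.mp ht.1)
    rw [card_union_of_disjoint hdisj, ht.2]
    exact ⟨by omega, subset_union_right⟩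
  · intro x hx
    simp only [coe_filter, mem_univ, true_and, Set.mem_ofPred_eq] at hx
    funext i
    grind [mem_boolSupport]
  · intro t ht
    simp only [mem_coe, mem_powersetCard] at ht
    ext i
    grind [mem_boolSupport, mem_compl]

lemma card_filter_card_boolSupport_eq (w : ℕ) :
    #{x : ι → Bool | #(boolSupport x) = w} = (Fintype.card ι).choose w := by
  simpa using card_filter_card_boolSupport_eq_and_subset (s := (∅ : Finset ι)) (Nat.zero_le w)

lemma card_filter_card_boolSupport_eq_and_subset_mul_descFactorial (s : Finset ι) {w : ℕ} :
    #{x : ι → Bool | #(boolSupport x) = w ∧ s ⊆ boolSupport x} *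
        (Fintype.card ι).descFactorial #s =
      (Fintype.card ι).choose w * w.descFactorial #s := by
  rcases le_or_gt #s w with hsw | hws
  · rw [card_filter_card_boolSupport_eq_and_subset hsw,
      Nat.descFactorial_eq_factorial_mul_choose, Nat.descFactorial_eq_factorial_mul_choose,
      mul_left_comm _ (Nat.factorial #s), mul_left_comm _ (Nat.factorial #s),
      Nat.choose_mul hsw, mul_comm ((Fintype.card ι).choose #s)]
  · rw [Nat.descFactorial_eq_zero_iff_lt.mpr hws, mul_zero, mul_eq_zero, card_eq_zero,
      filter_eq_empty_iff]
    exact Or.inl fun x _ ⟨hx, hsub⟩ => (card_le_card hsub).not_gt (hx ▸ hws)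

lemma card_filter_card_boolSupport_eq_zero_and_eq_true {f : (ι → Bool) → Bool}
    (h0 : f (fun _ => false) = false) :
    #{x : ι → Bool | #(boolSupport x) = 0 ∧ f x = true} = 0 := by
  rw [card_eq_zero, filter_eq_empty_iff]
  rintro x - ⟨hx, hfx⟩
  rw [card_eq_zero] at hx
  rw [← decide_mem_boolSupport x, hx] at hfx
  simp_all

lemma card_filter_card_boolSupport_eq_one_and_eq_true {f : (ι → Bool) → Bool}
    (h1 : ∀ i, f (fun j => decide (j = i)) = true) :
    #{x : ι → Bool | #(boolSupport x) = 1 ∧ f x = true} = Fintype.card ι := by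
  rw [← Nat.choose_one_right (Fintype.card ι), ← card_filter_card_boolSupport_eq]
  congr 1
  refine filter_congr fun x _ => and_iff_left_of_imp fun hx => ?_
  obtain ⟨i, hi⟩ := card_eq_one.mp hx
  rw [← decide_mem_boolSupport x, hi]
  simpa using h1 i

end BooleanCube

open scoped Polynomial

section Symmetrization

variable {ι : Type*} [Fintype ι] [DecidableEq ι]

/-- The Minsky–Papert symmetrization: `C(n, w) * (symmetrization P).eval w` is the sum of `P`
over the inputs of weight `w`. -/
def symmetrization (P : MvPolynomial ι ℝ) : ℝ[X] :=
  ∑ m ∈ P.support, Polynomial.C (P.coeff m / (Fintype.card ι).descFactorial #m.support) *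
    descPochhammer ℝ #m.support

omit [DecidableEq ι] in
lemma natDegree_symmetrization_le (P : MvPolynomial ι ℝ) :
    (symmetrization P).natDegree ≤ P.totalDegree := by
  refine Polynomial.natDegree_sum_le_of_forall_le _ _ fun m hm => ?_
  refine (Polynomial.natDegree_C_mul_le _ _).trans ?_
  rw [descPochhammer_natDegree]
  refine le_trans ?_ (le_totalDegree hm)
  simpa [Finsupp.sum] using card_nsmul_le_sum m.support m 1 fun i hi =>
    Nat.one_le_iff_ne_zero.mpr (Finsupp.mem_support_iff.mp hi)

lemma eval_boolToReal (P : MvPolynomial ι ℝ) (x : ι → Bool) :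
    eval (fun i => boolToReal (x i)) P =
      ∑ m ∈ P.support, if m.support ⊆ boolSupport x then P.coeff m else 0 := by
  rw [eval_eq]
  refine sum_congr rfl fun m _ => ?_
  rw [← mul_boole]
  congr 1
  calc ∏ i ∈ m.support, boolToReal (x i) ^ m i
      = ∏ i ∈ m.support, if x i = true then (1 : ℝ) else 0 := prod_congr rfl fun i hi => by
        cases x i <;> simp [boolToReal, Finsupp.mem_support_iff.mp hi]
    _ = _ := by simp [prod_boole, subset_iff]

lemma sum_eval_boolToReal_eq_choose_mul_eval_symmetrization (P : MvPolynomial ι ℝ) (w : ℕ) :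
    ∑ x : ι → Bool with #(boolSupport x) = w, eval (fun i => boolToReal (x i)) P =
      (Fintype.card ι).choose w * (symmetrization P).eval (w : ℝ) := by
  simp only [eval_boolToReal, symmetrization, Polynomial.eval_finsetSum, Polynomial.eval_mul,
    Polynomial.eval_C, descPochhammer_eval_eq_descFactorial, mul_sum]
  rw [sum_comm]
  refine sum_congr rfl fun m _ => ?_
  rw [← sum_filter, sum_const, nsmul_eq_mul, filter_filter]
  have hcount : (_ : ℝ) = _ := congrArg Nat.cast
    (card_filter_card_boolSupport_eq_and_subset_mul_descFactorial m.support (w := w))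
  push_cast at hcount
  have hne : ((Fintype.card ι).descFactorial #m.support : ℝ) ≠ 0 := by
    exact_mod_cast (Nat.descFactorial_pos.mpr (card_le_univ _)).ne'
  field_simp
  linear_combination P.coeff m * hcount

end Symmetrization

section Representation

variable {ι : Type*} [Fintype ι]

def cubeIndicator (y : ι → Bool) : MvPolynomial ι ℝ :=
  ∏ i, if y i then X i else 1 - X i

lemma eval_boolToReal_cubeIndicator (x y : ι → Bool) :
    eval (fun i => boolToReal (x i)) (cubeIndicator y) = if x = y then 1 else 0 := by
  rw [cubeIndicator, map_prod]
  calc ∏ i, eval (fun i => boolToReal (x i)) (if y i then X i else 1 - X i)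
      = ∏ i, if x i = y i then (1 : ℝ) else 0 := prod_congr rfl fun i _ => by
        rcases hx : x i <;> cases y i <;> simp [boolToReal, hx]
    _ = _ := by simp [prod_boole, _root_.funext_iff]

lemma degreeOf_cubeIndicator_le [DecidableEq ι] (y : ι → Bool) (i : ι) :
    degreeOf i (cubeIndicator y) ≤ 1 := by
  refine (degreeOf_prod_le _ _ _).trans ?_
  calc ∑ j, degreeOf i (if y j then X j else 1 - X j : MvPolynomial ι ℝ)
      ≤ ∑ j, if i = j then 1 else 0 := sum_le_sum fun j _ => by
        cases y j
        · exact (degreeOf_sub_le _ _ _).trans (by rw [degreeOf_one, degreeOf_X]; simp)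
        · exact (degreeOf_X i j).le
    _ = 1 := by simp

end Representation

lemma exists_isRepr {n : ℕ} (f : (Fin n → Bool) → Bool) : ∃ P, IsRepr f P := by
  refine ⟨∑ y, C (boolToReal (f y)) * cubeIndicator y, fun i => ?_, fun x => ?_⟩
  · exact (degreeOf_sum_le _ _ _).trans <| Finset.sup_le fun y _ =>
      (degreeOf_C_mul_le _ _ _).trans (degreeOf_cubeIndicator_le y i)
  · simp [eval_boolToReal_cubeIndicator]

lemma exists_isRepr_totalDegree_eq_bdeg {n : ℕ} (f : (Fin n → Bool) → Bool) :
    ∃ P, IsRepr f P ∧ P.totalDegree = bdeg f := by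
  obtain ⟨P, hP⟩ := exists_isRepr f
  exact Nat.sInf_mem (s := {d | ∃ P, IsRepr f P ∧ P.totalDegree = d}) ⟨_, P, hP, rfl⟩

section IsRepr

variable {n : ℕ} {f : (Fin n → Bool) → Bool} {P : MvPolynomial (Fin n) ℝ}

lemma IsRepr.card_filter_eq_choose_mul_eval_symmetrization (hP : IsRepr f P) (w : ℕ) :
    (#{x : Fin n → Bool | #(boolSupport x) = w ∧ f x = true} : ℝ) =
      n.choose w * (symmetrization P).eval (w : ℝ) := by
  have hsum := sum_eval_boolToReal_eq_choose_mul_eval_symmetrization P w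
  rw [Fintype.card_fin] at hsum
  rw [← hsum, sum_congr rfl fun x _ => hP.2 x]
  simp [boolToReal, sum_boole, filter_filter]

lemma IsRepr.eval_symmetrization_mem_Icc (hP : IsRepr f P) {w : ℕ} (hw : w ≤ n) :
    (symmetrization P).eval (w : ℝ) ∈ Set.Icc 0 1 := by
  have hpos : (0 : ℝ) < n.choose w := by exact_mod_cast Nat.choose_pos hw
  have hcount := hP.card_filter_eq_choose_mul_eval_symmetrization w
  have hle : #{x : Fin n → Bool | #(boolSupport x) = w ∧ f x = true} ≤ n.choose w :=
    calc _ ≤ #{x : Fin n → Bool | #(boolSupport x) = w} :=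
          card_le_card (monotone_filter_right _ fun _ _ => And.left)
      _ = n.choose w := by rw [card_filter_card_boolSupport_eq, Fintype.card_fin]
  constructor
  · exact (mul_nonneg_iff_of_pos_left hpos).mp (hcount ▸ Nat.cast_nonneg _)
  · refine le_of_mul_le_mul_left ?_ hpos
    rw [mul_one, ← hcount]
    exact_mod_cast hle

lemma IsRepr.eval_symmetrization_zero (hP : IsRepr f P) (h0 : f (fun _ => false) = false) :
    (symmetrization P).eval 0 = 0 := by
  have hcount := hP.card_filter_eq_choose_mul_eval_symmetrization 0
  rw [card_filter_card_boolSupport_eq_zero_and_eq_true h0] at hcount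
  simpa using hcount.symm

lemma IsRepr.eval_symmetrization_one (hP : IsRepr f P) (hn : n ≠ 0)
    (h1 : ∀ i, f (fun j => decide (j = i)) = true) :
    (symmetrization P).eval 1 = 1 := by
  have hcount := hP.card_filter_eq_choose_mul_eval_symmetrization 1
  rw [card_filter_card_boolSupport_eq_one_and_eq_true h1, Fintype.card_fin] at hcount
  simpa [hn] using hcount.symm

end IsRepr

lemma eval_eq_qPoly {p : ℝ[X]} (hdeg : p.natDegree ≤ 4) (h0 : p.eval 0 = 0) (h1 : p.eval 1 = 1)
    (hbdd : ∀ w : ℕ, w ≤ 10 → p.eval (w : ℝ) ∈ Set.Icc 0 1) (x : ℝ) :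
    p.eval x = qPoly x := by
  have hsum (y : ℝ) : p.eval y = ∑ i ∈ range 5, p.coeff i * y ^ i :=
    Polynomial.eval_eq_sum_range' (by omega) y
  simp only [sum_range_succ, sum_range_zero, zero_add] at hsum
  obtain ⟨-, h2⟩ := hbdd 2 (by norm_num)
  obtain ⟨h5, -⟩ := hbdd 5 (by norm_num)
  obtain ⟨-, h8⟩ := hbdd 8 (by norm_num)
  obtain ⟨-, h9⟩ := hbdd 9 (by norm_num)
  obtain ⟨h10, -⟩ := hbdd 10 (by norm_num)
  simp only [hsum] at h0 h1 h2 h5 h8 h9 h10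
  norm_num at h0 h1 h2 h5 h8 h9 h10
  have c0 : p.coeff 0 = 0 := by linarith
  have c1 : p.coeff 1 = 125 / 72 := by linarith
  have c2 : p.coeff 2 = -125 / 144 := by linarith
  have c3 : p.coeff 3 = 5 / 36 := by linarith
  have c4 : p.coeff 4 = -1 / 144 := by linarith
  rw [hsum, qPoly, c0, c1, c2, c3, c4]
  ring

/-- If `f : {0,1}^10 → {0,1}` has `d(f) ≤ 4`, `f(0) = 0` and `f(eᵢ) = 1` for every
standard basis vector `eᵢ`, then for every `0 ≤ w ≤ 10` the number of weight-`w`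
inputs on which `f` takes the value `1` equals `C(10,w)·q(w)`; that is, the only
univariate polynomial achievable as the symmetrization of such a function is `q`. -/
theorem unique_symmetrization (f : (Fin 10 → Bool) → Bool) (hdeg : bdeg f ≤ 4)
    (h0 : f (fun _ => false) = false)
    (h1 : ∀ i : Fin 10, f (fun j => decide (j = i)) = true) :
    ∀ w : ℕ, w ≤ 10 →
      ((Finset.univ.filter fun x : Fin 10 → Bool =>
          (Finset.univ.filter fun i : Fin 10 => x i = true).card = w ∧ f x = true).card : ℝ)
        = (Nat.choose 10 w : ℝ) * qPoly (w : ℝ) := by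
  obtain ⟨P, hP, hPdeg⟩ := exists_isRepr_totalDegree_eq_bdeg f
  have hq : ∀ x, (symmetrization P).eval x = qPoly x :=
    eval_eq_qPoly ((natDegree_symmetrization_le P).trans (hPdeg ▸ hdeg))
      (hP.eval_symmetrization_zero h0) (hP.eval_symmetrization_one (by norm_num) h1)
      fun w hw => hP.eval_symmetrization_mem_Icc hw
  intro w _
  rw [← hq]
  exact hP.card_filter_eq_choose_mul_eval_symmetrization w
end
end

section
/- Let p: ℝ → ℝ be a polynomial such that p(0) = 0, p(1) = 1, and 0 ≤ p(2) ≤ 1. Then there exists ξ ∈ [0,2] with |p''(ξ)| ≥ 1, where p'' is the second derivative of p. -/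
noncomputable section

open Polynomial

/-- Mean value theorem for polynomials. -/
lemma poly_mvt (q : Polynomial ℝ) {a b : ℝ} (hab : a < b) :
    ∃ c ∈ Set.Ioo a b, (derivative q).eval c = (q.eval b - q.eval a) / (b - a) := by
  obtain ⟨c, hc, hderiv⟩ := exists_deriv_eq_slope (fun x => q.eval x) hab
    (q.continuous_aeval.continuousOn) ((q.differentiable).differentiableOn)
  exact ⟨c, hc, by rwa [Polynomial.deriv] at hderiv⟩

/-- Let `p` be a real polynomial with `p(0) = 0`, `p(1) = 1` and `0 ≤ p(2) ≤ 1`.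
Then there exists `ξ ∈ [0,2]` with `|p''(ξ)| ≥ 1`. -/
theorem second_derivative_bound (p : Polynomial ℝ)
    (h0 : p.eval 0 = 0) (h1 : p.eval 1 = 1)
    (h2 : 0 ≤ p.eval 2 ∧ p.eval 2 ≤ 1) :
    ∃ ξ ∈ Set.Icc (0 : ℝ) 2, 1 ≤ |(Polynomial.derivative^[2] p).eval ξ| := by
  set q : Polynomial ℝ := p.comp (X + C 1) - p with hq
  have hqe : ∀ x : ℝ, q.eval x = p.eval (x + 1) - p.eval x := by
    intro x; simp [hq]
  have hq0 : q.eval 0 = 1 := by rw [hqe]; simp [h0, h1]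
  have hq1 : q.eval 1 = p.eval 2 - 1 := by rw [hqe]; norm_num [h1]
  obtain ⟨c, hc, hcval⟩ := poly_mvt q (show (0:ℝ) < 1 by norm_num)
  have hdq : derivative q = (derivative p).comp (X + C 1) - derivative p := by
    simp [hq, derivative_comp]
  have hcval' : (derivative p).eval (c + 1) - (derivative p).eval c = p.eval 2 - 2 := by
    rw [hdq] at hcval
    simp only [eval_sub, eval_comp, eval_add, eval_X, eval_C] at hcval
    rw [hcval, hq0, hq1]; ring
  obtain ⟨ξ, hξ, hξval⟩ := poly_mvt (derivative p) (show c < c + 1 by linarith)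
  refine ⟨ξ, ⟨by linarith [hξ.1, hc.1], by linarith [hξ.2, hc.2]⟩, ?_⟩
  rw [Function.iterate_succ, Function.iterate_one, Function.comp_apply]
  have : (derivative (derivative p)).eval ξ = p.eval 2 - 2 := by
    rw [hξval]; rw [show c + 1 - c = 1 by ring, div_one, hcval']
  rw [this, abs_sub_comm]
  rw [abs_of_nonneg (by linarith [h2.2])]
  linarith [h2.2]
end
end
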